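/- Under the hypotheses of the previous statement with p = s: for arbitrary distinct nodes c_1,...,c_s, the local error satisfies ρ_n = O(k^{s+1}). -/

import Mathlib

/-!
Variation of constants gives `u(tₙ + k) = S(k) u(tₙ) + ∫₀ᵏ S(k - σ) f(tₙ + σ) dσ`, and the
recursion `φ_m(kA) = 1/m! + kA φ_{m+1}(kA)` turns the bracketed sums of the scheme back into
`S(k) u(tₙ)` and `φ_{j+1}(kA) f(tₙ + cᵢk)`. What remains of `ρ_n` is the error of the quadrature
rule `∫₀ᵏ S(k - σ) g(σ) dσ ≈ k ∑ᵢ ∑ⱼ aᵢⱼ φ_{j+1}(kA) g(cᵢk)` applied to `g = f(tₙ + ·)`.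
Since `∑ⱼ aᵢⱼ θʲ/j!` is the Lagrange basis polynomial of the node `cᵢ` and interpolation at `s`
distinct nodes reproduces polynomials of degree `< s`, the rule is exact on the Taylor polynomial
of `f` at `tₙ`; the Taylor remainder is `O(σˢ)`, so the quadrature error is `O(k^{s+1})`.
-/

open Finset Set Filter Topology intervalIntegral
open scoped Nat

/-- `φ_k(τA₀)x = (1/τ^k) ∫_0^τ e^{(τ−σ)A₀} σ^{k−1}/(k−1)! x dσ`, expressed through the
semigroup `S t = e^{tA₀}`. -/
noncomputable def phiOp {X : Type*} [NormedAddCommGroup X] [NormedSpace ℝ X]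
    (S : ℝ → X →L[ℝ] X) (k : ℕ) (τ : ℝ) (x : X) : X :=
  (1 / τ ^ k) • ∫ σ in (0:ℝ)..τ, (σ ^ (k-1) / (Nat.factorial (k-1) : ℝ)) • S (τ - σ) x

theorem hasDerivAt_pow_succ_div_factorial (m : ℕ) (σ : ℝ) :
    HasDerivAt (fun σ : ℝ => σ ^ (m + 1) / (m + 1)!) (σ ^ m / m !) σ := by
  refine ((hasDerivAt_pow (m + 1) σ).div_const ((m + 1)! : ℝ)).congr_deriv ?_
  rw [Nat.add_sub_cancel, Nat.factorial_succ]
  push_cast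
  field_simp

section Interpolation

open Polynomial

variable {s : ℕ} {c : Fin s → ℝ} {a : Fin s → Fin s → ℝ}

def IsLagrangeBasisCoeff (c : Fin s → ℝ) (a : Fin s → Fin s → ℝ) : Prop :=
  ∀ i (θ : ℝ), (∏ j ∈ univ.filter (· ≠ i), (θ - c j) / (c i - c j)) =
    ∑ l : Fin s, a i l * θ ^ (l : ℕ) / (l ! : ℝ)

theorem lagrange_basis_eq_sum_C_mul_X_pow (ha : IsLagrangeBasisCoeff c a) (i : Fin s) :
    Lagrange.basis univ c i = ∑ l : Fin s, C (a i l / l !) * X ^ (l : ℕ) := by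
  refine Polynomial.funext fun θ => ?_
  simp only [Lagrange.basis, Lagrange.basisDivisor, eval_prod, eval_mul, eval_C, eval_sub, eval_X,
    eval_finsetSum, eval_pow, ← filter_ne', inv_mul_eq_div, ha i θ, mul_div_right_comm]

theorem sum_pow_mul_eq_ite (hc : Function.Injective c) (ha : IsLagrangeBasisCoeff c a) {r : ℕ}
    (hr : r < s) (l : Fin s) :
    ∑ i, c i ^ r * a i l = if (l : ℕ) = r then (r ! : ℝ) else 0 := by
  have hX : (X ^ r : ℝ[X]) = ∑ i, C (c i ^ r) * Lagrange.basis univ c i := by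
    simpa using Lagrange.eq_interpolate (s := univ) (f := X ^ r) hc.injOn
      (by simpa [degree_X_pow] using hr)
  have hcoeff := congrArg (coeff · l) hX
  simp only [coeff_X_pow, finsetSum_coeff, coeff_C_mul, lagrange_basis_eq_sum_C_mul_X_pow ha,
    mul_ite, mul_one, mul_zero, Fin.val_inj, sum_ite_eq, Finset.mem_univ, if_true] at hcoeff
  have hfac : (l ! : ℝ) ≠ 0 := by positivity
  rw [← div_left_inj' hfac, sum_div]
  simp_rw [mul_div_assoc, ← hcoeff]
  split_ifs with h
  · subst h
    exact (div_self hfac).symm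
  · exact (zero_div _).symm

theorem sum_sum_mul_pow_smul_eq (hc : Function.Injective c) (ha : IsLagrangeBasisCoeff c a)
    {r : ℕ} (hr : r < s) (k : ℝ) {M : Type*} [AddCommMonoid M] [Module ℝ M] (G : Fin s → M) :
    ∑ i, ∑ j, (a i j * ((c i * k) ^ r / r !)) • G j = k ^ r • G ⟨r, hr⟩ := by
  have hweights : ∀ j : Fin s,
      ∑ i, a i j * ((c i * k) ^ r / r !) = if (j : ℕ) = r then k ^ r else 0 := by
    intro j
    calc ∑ i, a i j * ((c i * k) ^ r / r !) = (∑ i, c i ^ r * a i j) * (k ^ r / r !) := by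
          rw [sum_mul]
          exact sum_congr rfl fun i _ => by ring
      _ = _ := by
          rw [sum_pow_mul_eq_ite hc ha hr j]
          split_ifs
          · field_simp
          · rw [zero_mul]
  rw [sum_comm]
  simp only [← sum_smul, hweights, ite_smul, zero_smul]
  rw [Fintype.sum_eq_single ⟨r, hr⟩ fun j hj => if_neg fun h => hj (Fin.ext h)]
  simp

end Interpolation

section

variable {X : Type*} [NormedAddCommGroup X] [NormedSpace ℝ X]

theorem exists_norm_sub_taylor_le {f : ℝ → X} {n : ℕ} (hf : ContDiff ℝ n f) (R : ℝ) :
    ∃ C, ∀ t σ, |t| ≤ R → |σ| ≤ R →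
      ‖f (t + σ) - ∑ r ∈ range n, (σ ^ r / r ! : ℝ) • iteratedDeriv r f t‖ ≤ C * |σ| ^ n := by
  induction n generalizing f with
  | zero =>
    obtain ⟨C, hC⟩ := (isCompact_closedBall (0 : ℝ) (R + R)).exists_bound_of_continuousOn
      hf.continuous.continuousOn
    refine ⟨C, fun t σ ht hσ => ?_⟩
    simpa using hC (t + σ) (by simpa using (abs_add_le t σ).trans (add_le_add ht hσ))
  | succ n ih =>
    obtain ⟨hdiff, -, hderiv⟩ := contDiff_succ_iff_deriv.1 (by push_cast at hf; exact hf)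
    obtain ⟨C, hC⟩ := ih hderiv
    refine ⟨max C 0, fun t σ ht hσ => ?_⟩
    have hremainder : ∀ τ, HasDerivAt
        (fun τ => f (t + τ) - ∑ r ∈ range (n + 1), (τ ^ r / r ! : ℝ) • iteratedDeriv r f t)
        (deriv f (t + τ) - ∑ r ∈ range n, (τ ^ r / r ! : ℝ) • iteratedDeriv r (deriv f) t) τ := by
      intro τ
      simp only [sum_range_succ', ← iteratedDeriv_succ', pow_zero, Nat.factorial_zero]
      exact ((hdiff (t + τ)).hasDerivAt.comp_const_add t τ).sub
        ((HasDerivAt.fun_sum fun r _ =>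
          (hasDerivAt_pow_succ_div_factorial r τ).smul_const _).add_const _)
    have hbound : ∀ τ ∈ Metric.closedBall 0 |σ|,
        ‖deriv f (t + τ) - ∑ r ∈ range n, (τ ^ r / r ! : ℝ) • iteratedDeriv r (deriv f) t‖ ≤
          max C 0 * |σ| ^ n := by
      intro τ hτ
      rw [mem_closedBall_zero_iff, Real.norm_eq_abs] at hτ
      calc _ ≤ C * |τ| ^ n := hC t τ ht (hτ.trans hσ)
        _ ≤ max C 0 * |σ| ^ n := by gcongr; exact le_max_left C 0
    have := (convex_closedBall (0 : ℝ) |σ|).norm_image_sub_le_of_norm_hasDerivWithin_le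
      (fun τ _ => (hremainder τ).hasDerivWithinAt) hbound
      (Metric.mem_closedBall_self (abs_nonneg σ))
      (mem_closedBall_zero_iff.2 (Real.norm_eq_abs σ).le)
    simpa [sum_range_succ', pow_succ, mul_assoc] using this

section StronglyContinuous

variable [CompleteSpace X] {S : ℝ → X →L[ℝ] X}

theorem exists_norm_le_of_isCompact (hcont : ∀ x, Continuous fun t => S t x) {K : Set ℝ}
    (hK : IsCompact K) : ∃ M, ∀ t ∈ K, ‖S t‖ ≤ M := by
  obtain ⟨M, hM⟩ := banach_steinhaus (g := fun t : K => S t) fun x =>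
    (hK.exists_bound_of_continuousOn (hcont x).continuousOn).imp fun _ h t => h t t.2
  exact ⟨M, fun t ht => hM ⟨t, ht⟩⟩

theorem continuous_apply_prod (hcont : ∀ x, Continuous fun t => S t x) :
    Continuous fun p : ℝ × X => S p.1 p.2 := by
  refine continuous_iff_continuousAt.2 fun p => ?_
  obtain ⟨M, hM⟩ := exists_norm_le_of_isCompact hcont (isCompact_Icc (a := p.1 - 1) (b := p.1 + 1))
  have hon : ContinuousOn (fun q : ℝ × X => S q.1 q.2) (Icc (p.1 - 1) (p.1 + 1) ×ˢ univ) :=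
    continuousOn_prod_of_continuousOn_lipschitzOnWith' _ M.toNNReal
      (fun t ht => ((S t).lipschitz.weaken ((Real.le_toNNReal_iff_coe_le
        ((norm_nonneg _).trans (hM t ht))).2 (hM t ht))).lipschitzOnWith)
      (fun x _ => (hcont x).continuousOn)
  exact hon.continuousAt (prod_mem_nhds (Icc_mem_nhds (by linarith) (by linarith)) univ_mem)

theorem intervalIntegrable_apply_sub (hcont : ∀ x, Continuous fun t => S t x) {w : ℝ → X}
    (hw : Continuous w) {k : ℝ} (a b : ℝ) :
    IntervalIntegrable (fun σ => S (k - σ) (w σ)) MeasureTheory.volume a b :=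
  ((continuous_apply_prod hcont).comp
    ((continuous_const.sub continuous_id).prodMk hw)).intervalIntegrable a b

end StronglyContinuous

section PhiOp

variable {S : ℝ → X →L[ℝ] X} {k : ℝ} {m : ℕ}

theorem integral_pow_smul_eq_phiOp (hk : k ≠ 0) (x : X) :
    ∫ σ in (0:ℝ)..k, S (k - σ) ((σ ^ m / m !) • x) = k ^ (m + 1) • phiOp S (m + 1) k x := by
  simp only [phiOp, Nat.add_sub_cancel, smul_smul, map_smul]
  rw [mul_one_div_cancel (pow_ne_zero _ hk), one_smul]

theorem phiOp_smul (r : ℝ) (x : X) : phiOp S m k (r • x) = r • phiOp S m k x := by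
  simp only [phiOp, map_smul, smul_comm _ r, integral_smul]

theorem phiOp_add (hcont : ∀ x, Continuous fun t => S t x) (x y : X) :
    phiOp S m k (x + y) = phiOp S m k x + phiOp S m k y := by
  have hint : ∀ z : X, IntervalIntegrable
      (fun σ : ℝ => (σ ^ (m - 1) / (m - 1)! : ℝ) • S (k - σ) z) MeasureTheory.volume 0 k :=
    fun z => (by fun_prop : Continuous fun σ : ℝ => (σ ^ (m - 1) / (m - 1)! : ℝ)).smul
      ((hcont z).comp (continuous_const.sub continuous_id)) |>.intervalIntegrable 0 k
  simp only [phiOp, map_add, smul_add, integral_add (hint x) (hint y)]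

theorem phiOp_sum (hcont : ∀ x, Continuous fun t => S t x) {ι : Type*} (t : Finset ι)
    (v : ι → X) : phiOp S m k (∑ i ∈ t, v i) = ∑ i ∈ t, phiOp S m k (v i) :=
  map_sum (AddMonoidHom.mk' (phiOp S m k) (phiOp_add hcont)) v t

theorem norm_phiOp_le (hk : 0 < k) {M : ℝ} (hM : ∀ t ∈ Icc 0 k, ‖S t‖ ≤ M) (x : X) :
    ‖phiOp S (m + 1) k x‖ ≤ M * ‖x‖ := by
  have hbound : ∀ σ ∈ uIoc 0 k, ‖(σ ^ m / m ! : ℝ) • S (k - σ) x‖ ≤ k ^ m * (M * ‖x‖) := by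
    rintro σ ⟨hσ0, hσk⟩
    rw [max_eq_right hk.le] at hσk
    rw [min_eq_left hk.le] at hσ0
    rw [norm_smul, Real.norm_of_nonneg (by positivity)]
    gcongr
    · calc σ ^ m / m ! ≤ σ ^ m := div_le_self (by positivity) (mod_cast m.factorial_pos)
        _ ≤ k ^ m := by gcongr
    · exact ((S _).le_opNorm x).trans (by gcongr; exact hM _ ⟨by linarith, by linarith⟩)
  have hint := norm_integral_le_of_norm_le_const hbound
  simp only [phiOp, Nat.add_sub_cancel, norm_smul, sub_zero, abs_of_pos hk] at hint ⊢
  calc ‖1 / k ^ (m + 1)‖ * ‖∫ σ in (0:ℝ)..k, (σ ^ m / m ! : ℝ) • S (k - σ) x‖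
      ≤ 1 / k ^ (m + 1) * (k ^ m * (M * ‖x‖) * k) := by
        rw [Real.norm_of_nonneg (by positivity)]; gcongr
    _ = M * ‖x‖ := by field_simp; ring

end PhiOp

structure IsSemigroupGeneratedBy (S : ℝ → X →L[ℝ] X) (A : X →ₗ[ℝ] X) : Prop where
  map_zero' : S 0 = 1
  map_add' : ∀ a b : ℝ, 0 ≤ a → 0 ≤ b → S (a + b) = S a ∘L S b
  continuous_apply : ∀ x, Continuous fun t => S t x
  hasDerivAt_apply : ∀ x t, 0 ≤ t → HasDerivAt (fun r => S r x) (A (S t x)) t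

namespace IsSemigroupGeneratedBy

variable {S : ℝ → X →L[ℝ] X} {A : X →ₗ[ℝ] X} (hS : IsSemigroupGeneratedBy S A)
include hS

theorem generator_apply_comm {t : ℝ} (ht : 0 ≤ t) (x : X) : A (S t x) = S t (A x) := by
  have hright : HasDerivWithinAt (fun h => S (t + h) x) (A (S t x)) (Ici 0) 0 := by
    have h : HasDerivAt (fun r => S r x) (A (S t x)) (t + 0) := by
      simpa using hS.hasDerivAt_apply x t ht
    simpa using (h.comp_const_add t 0).hasDerivWithinAt
  have hleft : HasDerivWithinAt (fun h => S (t + h) x) (S t (A x)) (Ici 0) 0 := by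
    have h := ((S t).hasFDerivAt.comp_hasDerivAt 0
      (hS.hasDerivAt_apply x 0 le_rfl)).hasDerivWithinAt (s := Ici 0)
    simp only [hS.map_zero'] at h
    refine h.congr (fun h hh => by simp [hS.map_add' t h ht hh]) (by simp [hS.map_zero'])
  exact (uniqueDiffOn_Ici 0 0 self_mem_Ici).eq_deriv _ hright hleft

variable [CompleteSpace X] {k : ℝ}

theorem hasDerivAt_apply_sub {y : ℝ → X} {y' : X} {σ : ℝ} (hσ : σ ≤ k)
    (hy : HasDerivAt y y' σ) :
    HasDerivAt (fun τ => S (k - τ) (y τ)) (S (k - σ) y' - A (S (k - σ) (y σ))) σ := by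
  -- `t ↦ S t` need not be differentiable in operator norm, so there is no product rule: the
  -- slope of the first summand is `S (k - τ) (slope y σ τ)`, which converges by joint continuity.
  have hincr : HasDerivAt (fun τ => S (k - τ) (y τ - y σ)) (S (k - σ) y') σ := by
    refine hasDerivAt_iff_tendsto_slope.2 ?_
    have hpair : Tendsto (fun τ => (k - τ, slope y σ τ)) (𝓝[≠] σ) (𝓝 (k - σ, y')) :=
      ((continuous_const.sub continuous_id).tendsto σ).mono_left nhdsWithin_le_nhds
        |>.prodMk_nhds hy.tendsto_slope
    refine ((continuous_apply_prod hS.continuous_apply).tendsto _ |>.comp hpair).congr fun τ => ?_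
    simp [slope_def_module, map_smul]
  have hbase : HasDerivAt (fun τ => S (k - τ) (y σ)) (-A (S (k - σ) (y σ))) σ := by
    simpa [Function.comp_def] using (hS.hasDerivAt_apply (y σ) (k - σ) (sub_nonneg.2 hσ)).scomp σ
      ((hasDerivAt_id σ).const_sub k)
  convert hincr.add hbase using 1
  · ext τ
    simp
  · abel

theorem variation_of_constants {y g : ℝ → X} (hk : 0 ≤ k)
    (hy : ContinuousOn y (Icc 0 k)) (hg : ContinuousOn g (Icc 0 k))
    (hderiv : ∀ σ ∈ Ioo 0 k, HasDerivAt y (A (y σ) + g σ) σ) :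
    y k = S k (y 0) + ∫ σ in (0:ℝ)..k, S (k - σ) (g σ) := by
  have hjoint := continuous_apply_prod hS.continuous_apply
  have hsub : ContinuousOn (fun σ : ℝ => k - σ) (Icc 0 k) := by fun_prop
  have hFTC := integral_eq_sub_of_hasDeriv_right_of_le hk
    (hjoint.comp_continuousOn (hsub.prodMk hy))
    (fun σ hσ => ?_) ((hjoint.comp_continuousOn (hsub.prodMk hg)).intervalIntegrable_of_Icc hk)
  · simp only [Function.comp_def, sub_self, sub_zero, hS.map_zero'] at hFTC
    simp [hFTC]
  · have h := hS.hasDerivAt_apply_sub hσ.2.le (hderiv σ hσ)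
    rw [map_add, ← hS.generator_apply_comm (by linarith [hσ.2]), add_sub_cancel_left] at h
    exact h.hasDerivWithinAt

theorem phiOp_succ (hk : 0 < k) (m : ℕ) (x : X) :
    phiOp S (m + 1) k x = ((m + 1)! : ℝ)⁻¹ • x + k • phiOp S (m + 2) k (A x) := by
  have hvoc := hS.variation_of_constants (y := fun σ => (σ ^ (m + 1) / (m + 1)! : ℝ) • x)
    (g := fun σ => (σ ^ m / m ! : ℝ) • x - (σ ^ (m + 1) / (m + 1)! : ℝ) • A x) hk.le
    (by fun_prop) (by fun_prop) fun σ _ => by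
      rw [map_smul, add_sub_cancel]
      exact (hasDerivAt_pow_succ_div_factorial m σ).smul_const x
  have hint : ∀ (n : ℕ) (z : X), IntervalIntegrable (fun σ => S (k - σ) ((σ ^ n / n ! : ℝ) • z))
      MeasureTheory.volume 0 k := fun n z =>
    intervalIntegrable_apply_sub hS.continuous_apply (by fun_prop) 0 k
  simp only [map_sub, integral_sub (hint m x) (hint (m + 1) (A x)),
    integral_pow_smul_eq_phiOp hk.ne', zero_pow m.succ_ne_zero, zero_div, zero_smul, map_zero,
    zero_add] at hvoc
  refine smul_right_injective X (pow_ne_zero (m + 1) hk.ne') ?_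
  linear_combination (norm := module) -hvoc

theorem apply_eq_add_phiOp (hk : 0 < k) (x : X) : S k x = x + k • phiOp S 1 k (A x) := by
  have hvoc := hS.variation_of_constants (y := fun _ => x) (g := fun _ => -A x) hk.le
    continuousOn_const continuousOn_const fun σ _ => by
      simpa using hasDerivAt_const σ x
  have h := integral_pow_smul_eq_phiOp (S := S) (m := 0) hk.ne' (A x)
  simp only [pow_zero, Nat.factorial_zero, Nat.cast_one, div_one, one_smul, zero_add] at h
  simp only [map_neg, intervalIntegral.integral_neg, h, pow_one] at hvoc
  linear_combination (norm := module) -hvoc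

theorem phiOp_eq_sum_add (hk : 0 < k) (n j : ℕ) (x : X) :
    phiOp S (j + 1) k x = ∑ l ∈ range n, (k ^ l / (l + j + 1)! : ℝ) • (A ^ l) x +
      k ^ n • phiOp S (n + j + 1) k ((A ^ n) x) := by
  induction n with
  | zero => simp
  | succ n ih =>
    rw [ih, hS.phiOp_succ hk (n + j), sum_range_succ, ← Module.End.mul_apply, ← pow_succ',
      show n + j + 2 = n + 1 + j + 1 by omega]
    module

theorem apply_eq_sum_add (hk : 0 < k) (n : ℕ) (x : X) :
    S k x = ∑ l ∈ range (n + 1), (k ^ l / l ! : ℝ) • (A ^ l) x +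
      k ^ (n + 1) • phiOp S (n + 1) k ((A ^ (n + 1)) x) := by
  rw [hS.apply_eq_add_phiOp hk, hS.phiOp_eq_sum_add hk n 0, sum_range_succ']
  simp only [smul_add, smul_sum, smul_smul, ← Module.End.mul_apply, ← pow_succ, ← pow_succ',
    mul_div_assoc', add_zero, pow_zero, Nat.factorial_zero, Nat.cast_one, div_one, one_smul,
    Module.End.one_apply]
  abel

end IsSemigroupGeneratedBy

section Quadrature

variable {S : ℝ → X →L[ℝ] X} {s : ℕ} {c : Fin s → ℝ} {a : Fin s → Fin s → ℝ} {k : ℝ}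

noncomputable def quadratureError (S : ℝ → X →L[ℝ] X) (c : Fin s → ℝ) (a : Fin s → Fin s → ℝ)
    (k : ℝ) (g : ℝ → X) : X :=
  (∫ σ in (0:ℝ)..k, S (k - σ) (g σ)) - k • ∑ i, ∑ j, a i j • phiOp S (j + 1) k (g (c i * k))

theorem quadratureError_add [CompleteSpace X] (hcont : ∀ x, Continuous fun t => S t x)
    {g h : ℝ → X} (hg : Continuous g) (hh : Continuous h) :
    quadratureError S c a k (g + h) = quadratureError S c a k g + quadratureError S c a k h := by
  simp only [quadratureError, Pi.add_apply, map_add,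
    integral_add (intervalIntegrable_apply_sub hcont hg 0 k)
      (intervalIntegrable_apply_sub hcont hh 0 k),
    phiOp_add hcont, smul_add, sum_add_distrib]
  abel

theorem quadratureError_taylorPoly [CompleteSpace X] (hcont : ∀ x, Continuous fun t => S t x)
    (hc : Function.Injective c) (ha : IsLagrangeBasisCoeff c a) (hk : k ≠ 0) (v : ℕ → X) :
    quadratureError S c a k (fun σ => ∑ r ∈ range s, (σ ^ r / r ! : ℝ) • v r) = 0 := by
  have hint : ∀ r ∈ range s, IntervalIntegrable (fun σ => S (k - σ) ((σ ^ r / r ! : ℝ) • v r))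
      MeasureTheory.volume 0 k := fun r _ =>
    intervalIntegrable_apply_sub hcont (by fun_prop) 0 k
  have hnodes : ∀ r ∈ range s, ∑ i, ∑ j, a i j • phiOp S (j + 1) k (((c i * k) ^ r / r ! : ℝ) • v r)
      = k ^ r • phiOp S (r + 1) k (v r) := fun r hr => by
    simp only [phiOp_smul, smul_smul]
    exact sum_sum_mul_pow_smul_eq hc ha (mem_range.1 hr) k _
  rw [quadratureError, sub_eq_zero]
  simp only [map_sum, integral_finsetSum hint, integral_pow_smul_eq_phiOp hk, phiOp_sum hcont]
  have hswap : ∑ i, ∑ j, a i j • ∑ r ∈ range s, phiOp S (j + 1) k (((c i * k) ^ r / r ! : ℝ) • v r)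
      = ∑ r ∈ range s, ∑ i, ∑ j, a i j • phiOp S (j + 1) k (((c i * k) ^ r / r ! : ℝ) • v r) := by
    simp only [smul_sum]
    conv_lhs => enter [2, i]; rw [sum_comm]
    rw [sum_comm]
  rw [hswap, sum_congr rfl hnodes, smul_sum]
  simp only [smul_smul, ← pow_succ']

theorem norm_quadratureError_le (hk : 0 < k) {M : ℝ} (hM : ∀ t ∈ Icc 0 k, ‖S t‖ ≤ M)
    {g : ℝ → X} {C R : ℝ} (hg : ∀ σ, |σ| ≤ R → ‖g σ‖ ≤ C * |σ| ^ s) (hkR : k ≤ R)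
    (hcR : ∀ i, |c i * k| ≤ R) :
    ‖quadratureError S c a k g‖ ≤ M * C * (1 + ∑ i, ∑ j, |a i j| * |c i| ^ s) * k ^ (s + 1) := by
  have hM0 : 0 ≤ M := (norm_nonneg _).trans (hM k ⟨hk.le, le_rfl⟩)
  have hC0 : 0 ≤ C := le_of_mul_le_mul_right
    (by simpa using (norm_nonneg _).trans (hg k (by rwa [abs_of_pos hk])))
    (by positivity : 0 < |k| ^ s)
  have hintegral : ‖∫ σ in (0:ℝ)..k, S (k - σ) (g σ)‖ ≤ M * C * k ^ s * k := by
    have hbound : ∀ σ ∈ uIoc 0 k, ‖S (k - σ) (g σ)‖ ≤ M * C * k ^ s := by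
      rintro σ ⟨hσ0, hσk⟩
      rw [min_eq_left hk.le] at hσ0
      rw [max_eq_right hk.le] at hσk
      have hσ : |σ| ≤ k := by rwa [abs_of_pos hσ0]
      calc ‖S (k - σ) (g σ)‖ ≤ M * ‖g σ‖ :=
            ((S _).le_opNorm _).trans (by gcongr; exact hM _ ⟨by linarith, by linarith⟩)
        _ ≤ M * (C * |σ| ^ s) := by gcongr; exact hg σ (hσ.trans hkR)
        _ ≤ M * C * k ^ s := by rw [← mul_assoc]; gcongr
    simpa [abs_of_pos hk] using norm_integral_le_of_norm_le_const hbound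
  have hnodes : ‖k • ∑ i, ∑ j, a i j • phiOp S (j + 1) k (g (c i * k))‖ ≤
      k * ∑ i, ∑ j, |a i j| * (M * (C * (|c i| ^ s * k ^ s))) := by
    rw [norm_smul, Real.norm_of_nonneg hk.le]
    gcongr
    refine (norm_sum_le _ _).trans (sum_le_sum fun i _ =>
      (norm_sum_le _ _).trans (sum_le_sum fun j _ => ?_))
    rw [norm_smul, Real.norm_eq_abs]
    gcongr
    refine (norm_phiOp_le hk hM _).trans ?_
    gcongr
    calc ‖g (c i * k)‖ ≤ C * |c i * k| ^ s := hg _ (hcR i)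
      _ = C * (|c i| ^ s * k ^ s) := by rw [abs_mul, abs_of_pos hk, mul_pow]
  have hweights : ∑ i, ∑ j, |a i j| * (M * (C * (|c i| ^ s * k ^ s))) =
      (∑ i, ∑ j, |a i j| * |c i| ^ s) * (M * C * k ^ s) := by
    simp only [sum_mul]
    exact sum_congr rfl fun i _ => sum_congr rfl fun j _ => by ring
  rw [quadratureError]
  calc _ ≤ _ := norm_sub_le _ _
    _ ≤ M * C * k ^ s * k + k * ∑ i, ∑ j, |a i j| * (M * (C * (|c i| ^ s * k ^ s))) :=
        add_le_add hintegral hnodes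
    _ = _ := by rw [hweights]; ring

theorem norm_quadratureError_le_of_taylor [CompleteSpace X]
    (hcont : ∀ x, Continuous fun t => S t x) (hc : Function.Injective c)
    (ha : IsLagrangeBasisCoeff c a) (hk : 0 < k) {M : ℝ} (hM : ∀ t ∈ Icc 0 k, ‖S t‖ ≤ M)
    {g : ℝ → X} (hg : Continuous g)
    (v : ℕ → X) {C R : ℝ}
    (hgv : ∀ σ, |σ| ≤ R → ‖g σ - ∑ r ∈ range s, (σ ^ r / r ! : ℝ) • v r‖ ≤ C * |σ| ^ s)
    (hkR : k ≤ R) (hcR : ∀ i, |c i * k| ≤ R) :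
    ‖quadratureError S c a k g‖ ≤ M * C * (1 + ∑ i, ∑ j, |a i j| * |c i| ^ s) * k ^ (s + 1) := by
  have hpoly : Continuous fun σ => ∑ r ∈ range s, (σ ^ r / r ! : ℝ) • v r := by fun_prop
  rw [← sub_add_cancel g fun σ => ∑ r ∈ range s, (σ ^ r / r ! : ℝ) • v r,
    quadratureError_add hcont (hg.sub hpoly) hpoly, quadratureError_taylorPoly hcont hc ha hk.ne',
    add_zero]
  exact norm_quadratureError_le hk hM hgv hkR hcR

end Quadrature

end

theorem local_error_order_s_plus_one_general {X : Type*} [NormedAddCommGroup X]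
    [NormedSpace ℝ X] [CompleteSpace X]
    (S : ℝ → X →L[ℝ] X) (hS0 : S 0 = 1)
    (hSadd : ∀ a b : ℝ, 0 ≤ a → 0 ≤ b → S (a + b) = S a ∘L S b)
    (hScont : ∀ x : X, Continuous fun t => S t x)
    (T : ℝ)
    (A : X →ₗ[ℝ] X)
    (hgen : ∀ (x : X) (t : ℝ), 0 ≤ t → HasDerivAt (fun r => S r x) (A (S t x)) t)
    (s : ℕ) (c : Fin s → ℝ) (hc : Function.Injective c)
    (a : Fin s → Fin s → ℝ)
    (ha : ∀ i (θ : ℝ),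
      (∏ j ∈ univ.filter (· ≠ i), (θ - c j) / (c i - c j)) =
        ∑ l : Fin s, a i l * θ ^ (l : ℕ) / (Nat.factorial l : ℝ))
    (u f : ℝ → X)
    (hode : ∀ t : ℝ, HasDerivAt u (A (u t) + f t) t)
    (hf : ContDiff ℝ s f) :
    ∃ C : ℝ, ∀ tn k : ℝ, 0 ≤ tn → 0 < k → tn + k ≤ T →
      ‖u (tn + k) -
          ((∑ l ∈ range (s+1), (k ^ l / (Nat.factorial l : ℝ)) • (A ^ l) (u tn)) +
            k ^ (s+1) • phiOp S (s+1) k ((A ^ (s+1)) (u tn)) +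
            k • ∑ i : Fin s, ∑ j : Fin s, a i j •
              ((∑ l ∈ range s,
                  (k ^ l / (Nat.factorial (l + (j : ℕ) + 1) : ℝ)) •
                    (A ^ l) (f (tn + c i * k))) +
                k ^ s • phiOp S (s + (j : ℕ) + 1) k ((A ^ s) (f (tn + c i * k)))))‖ ≤
        C * k ^ (s+1) := by
  have hS : IsSemigroupGeneratedBy S A := ⟨hS0, hSadd, hScont, hgen⟩
  obtain ⟨M, hM⟩ := exists_norm_le_of_isCompact hScont (isCompact_Icc (a := 0) (b := T))
  obtain ⟨C, hC⟩ := exists_norm_sub_taylor_le hf (T * (1 + ∑ i, |c i|))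
  refine ⟨M * C * (1 + ∑ i, ∑ j, |a i j| * |c i| ^ s), fun tn k htn hk hkT => ?_⟩
  simp only [← hS.apply_eq_sum_add hk s, ← hS.phiOp_eq_sum_add hk s]
  have hu : Continuous u := continuous_iff_continuousAt.2 fun t => (hode t).continuousAt
  have hfc : Continuous f := hf.continuous
  have hvoc := hS.variation_of_constants (y := fun σ => u (tn + σ)) (g := fun σ => f (tn + σ))
    hk.le (by fun_prop) (by fun_prop) fun σ _ => (hode (tn + σ)).comp_const_add tn σ
  rw [add_zero] at hvoc
  rw [hvoc, add_sub_add_left_eq_sub]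
  have hB : 0 ≤ ∑ i, |c i| := sum_nonneg fun i _ => abs_nonneg (c i)
  have hcR : ∀ i, |c i * k| ≤ T * (1 + ∑ i, |c i|) := fun i => by
    rw [abs_mul, abs_of_pos hk]
    nlinarith [single_le_sum (fun i _ => abs_nonneg (c i)) (mem_univ i), abs_nonneg (c i)]
  exact norm_quadratureError_le_of_taylor hScont hc ha hk
    (fun t ht => hM t ⟨ht.1, by linarith [ht.2]⟩) (by fun_prop) (fun r => iteratedDeriv r f tn)
    (hC tn · (by rw [abs_of_nonneg htn]; nlinarith)) (by nlinarith) hcR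

/-- Theorem 4.4: with `p = s` in the regularity assumption and in the scheme, for
arbitrary distinct nodes `c₁,…,c_s` the local truncation error of the exponential
quadrature rule with boundary corrections satisfies `ρ_n = O(k^{s+1})`. -/
theorem local_error_order_s_plus_one {X : Type*} [NormedAddCommGroup X]
    [NormedSpace ℝ X] [CompleteSpace X]
    (S : ℝ → X →L[ℝ] X) (hS0 : S 0 = 1)
    (hSadd : ∀ a b : ℝ, 0 ≤ a → 0 ≤ b → S (a + b) = S a ∘L S b)
    (hScont : ∀ x : X, Continuous fun t => S t x)
    (T : ℝ) (hT : 0 < T)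
    (hSbdd : ∃ M : ℝ, ∀ t ∈ Icc (0:ℝ) T, ‖S t‖ ≤ M)
    (A : X →ₗ[ℝ] X)
    (hgen : ∀ (x : X) (t : ℝ), 0 ≤ t → HasDerivAt (fun r => S r x) (A (S t x)) t)
    (s : ℕ) (c : Fin s → ℝ) (hc : Function.Injective c)
    (a : Fin s → Fin s → ℝ)
    (ha : ∀ i (θ : ℝ),
      (∏ j ∈ univ.filter (· ≠ i), (θ - c j) / (c i - c j)) =
        ∑ l : Fin s, a i l * θ ^ (l : ℕ) / (Nat.factorial l : ℝ))
    (u f : ℝ → X)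
    (hode : ∀ t : ℝ, HasDerivAt u (A (u t) + f t) t)
    (hreg : ∀ j ≤ s + 1, Continuous fun t => (A ^ (s + 1 - j)) (iteratedDeriv j u t))
    (hf : ContDiff ℝ s f)
    (hfreg : ∀ l r : ℕ, l + r ≤ s → Continuous fun t => (A ^ l) (iteratedDeriv r f t)) :
    ∃ C : ℝ, ∀ tn k : ℝ, 0 ≤ tn → 0 < k → tn + k ≤ T →
      ‖u (tn + k) -
          ((∑ l ∈ range (s+1), (k ^ l / (Nat.factorial l : ℝ)) • (A ^ l) (u tn)) +
            k ^ (s+1) • phiOp S (s+1) k ((A ^ (s+1)) (u tn)) +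
            k • ∑ i : Fin s, ∑ j : Fin s, a i j •
              ((∑ l ∈ range s,
                  (k ^ l / (Nat.factorial (l + (j : ℕ) + 1) : ℝ)) •
                    (A ^ l) (f (tn + c i * k))) +
                k ^ s • phiOp S (s + (j : ℕ) + 1) k ((A ^ s) (f (tn + c i * k)))))‖ ≤
        C * k ^ (s+1) :=
  local_error_order_s_plus_one_general S hS0 hSadd hScont T A hgen s c hc a ha u f hode hf
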